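/- arXiv:2305.16903 — 11 statements merged into one kernel-verified Lean document; each statement's English description precedes it below -/
import Mathlib

section
/- If f : 2^(N1 ⊔ N2) → ℝ≥0 is a non-negative submodular set function on the disjoint union of finite ground sets N1 and N2, then the function g : 2^(N2) → ℝ≥0 defined by g(Y) = min over X ⊆ N1 of f(X ∪ Y) is submodular. -/
open Finset

/-- If `f` is a non-negative submodular set function on the disjoint union of
finite ground sets `N1` and `N2`, then `g(Y) = min_{X ⊆ N1} f(X ∪ Y)` is submodular on `2^N2`. -/
theorem stmt_0 {α : Type*} [DecidableEq α] (N1 N2 : Finset α) (hdisj : Disjoint N1 N2)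
    (f : Finset α → ℝ)
    (hf_nonneg : ∀ S ⊆ N1 ∪ N2, 0 ≤ f S)
    (hf_sub : ∀ A ⊆ N1 ∪ N2, ∀ B ⊆ N1 ∪ N2, f (A ∪ B) + f (A ∩ B) ≤ f A + f B)
    (g : Finset α → ℝ)
    (hg : ∀ Y : Finset α,
      g Y = N1.powerset.inf' ⟨∅, Finset.empty_mem_powerset _⟩ (fun X => f (X ∪ Y))) :
    ∀ Y₁ ⊆ N2, ∀ Y₂ ⊆ N2, g (Y₁ ∪ Y₂) + g (Y₁ ∩ Y₂) ≤ g Y₁ + g Y₂ := by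
  intro Y₁ hY₁ Y₂ hY₂
  obtain ⟨X₁, hX₁mem, hX₁⟩ := exists_mem_eq_inf' (⟨∅, Finset.empty_mem_powerset _⟩ :
    N1.powerset.Nonempty) (fun X => f (X ∪ Y₁))
  obtain ⟨X₂, hX₂mem, hX₂⟩ := exists_mem_eq_inf' (⟨∅, Finset.empty_mem_powerset _⟩ :
    N1.powerset.Nonempty) (fun X => f (X ∪ Y₂))
  rw [mem_powerset] at hX₁mem hX₂mem
  have h1 : g Y₁ = f (X₁ ∪ Y₁) := by rw [hg]; exact hX₁
  have h2 : g Y₂ = f (X₂ ∪ Y₂) := by rw [hg]; exact hX₂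
  have hu : g (Y₁ ∪ Y₂) ≤ f ((X₁ ∪ X₂) ∪ (Y₁ ∪ Y₂)) := by
    rw [hg]
    exact inf'_le _ (mem_powerset.2 (union_subset hX₁mem hX₂mem))
  have hi : g (Y₁ ∩ Y₂) ≤ f ((X₁ ∩ X₂) ∪ (Y₁ ∩ Y₂)) := by
    rw [hg]
    exact inf'_le _ (mem_powerset.2 ((inter_subset_left).trans hX₁mem))
  have hkey := hf_sub (X₁ ∪ Y₁) (union_subset (hX₁mem.trans subset_union_left)
    (hY₁.trans subset_union_right)) (X₂ ∪ Y₂)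
    (union_subset (hX₂mem.trans subset_union_left) (hY₂.trans subset_union_right))
  have e1 : (X₁ ∪ Y₁) ∪ (X₂ ∪ Y₂) = (X₁ ∪ X₂) ∪ (Y₁ ∪ Y₂) := by
    ext a; simp; tauto
  have e2 : (X₁ ∪ Y₁) ∩ (X₂ ∪ Y₂) = (X₁ ∩ X₂) ∪ (Y₁ ∩ Y₂) := by
    ext a
    simp only [mem_inter, mem_union]
    constructor
    · rintro ⟨h1 | h1, h2 | h2⟩
      · exact Or.inl ⟨h1, h2⟩
      · exact absurd (hdisj.forall_ne_finset (hX₁mem h1) (hY₂ h2)) (by simp)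
      · exact absurd (hdisj.forall_ne_finset (hX₂mem h2) (hY₁ h1)) (by simp)
      · exact Or.inr ⟨h1, h2⟩
    · rintro (⟨h1, h2⟩ | ⟨h1, h2⟩) <;> tauto
  rw [e1, e2] at hkey
  linarith
end

section
/- Let f : 2^(N1 ⊔ N2) → ℝ≥0 be non-negative and submodular when restricted to N2, with ∅ ∈ F2 and {u} ∈ F2 for all u ∈ N2. Let X' ⊆ N1 minimize g(X) = f(X) + Σ_{u ∈ N2} f(X ∪ {u}). Then max_{Y ∈ F2} f(X' ∪ Y) lies in the interval [τ, (|N2| + 1)·τ], where τ = min_{X ⊆ N1} max_{Y ∈ F2} f(X ∪ Y). -/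
open Finset

/-- If `X'` minimizes `g(X) = f(X) + ∑_{u ∈ N2} f(X ∪ {u})` over `X ⊆ N1`, then
`max_{Y ∈ F2} f(X' ∪ Y)` lies in `[τ, (|N2| + 1)·τ]` where
`τ = min_{X ⊆ N1} max_{Y ∈ F2} f(X ∪ Y)`. -/
theorem stmt_3 {α : Type*} [DecidableEq α] (N1 N2 : Finset α) (hdisj : Disjoint N1 N2)
    (f : Finset α → ℝ)
    (hf_nonneg : ∀ S ⊆ N1 ∪ N2, 0 ≤ f S)
    (hf_sub2 : ∀ X ⊆ N1, ∀ A ⊆ N2, ∀ B ⊆ N2,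
      f (X ∪ (A ∪ B)) + f (X ∪ (A ∩ B)) ≤ f (X ∪ A) + f (X ∪ B))
    (g : Finset α → ℝ)
    (hg : ∀ X : Finset α, g X = f X + ∑ u ∈ N2, f (X ∪ {u}))
    (F2 : Finset (Finset α)) (hF2sub : ∀ Y ∈ F2, Y ⊆ N2)
    (hF2empty : ∅ ∈ F2) (hF2single : ∀ u ∈ N2, {u} ∈ F2)
    (X' : Finset α) (hX'sub : X' ⊆ N1) (hX'min : ∀ X ⊆ N1, g X' ≤ g X)
    (τ : ℝ)
    (hτ : τ = N1.powerset.inf' ⟨∅, Finset.empty_mem_powerset _⟩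
      (fun X => F2.sup' ⟨∅, hF2empty⟩ (fun Y => f (X ∪ Y)))) :
    τ ≤ F2.sup' ⟨∅, hF2empty⟩ (fun Y => f (X' ∪ Y)) ∧
      F2.sup' ⟨∅, hF2empty⟩ (fun Y => f (X' ∪ Y)) ≤ ((N2.card : ℝ) + 1) * τ := by
  constructor
  · rw [hτ]
    exact Finset.inf'_le _ (Finset.mem_powerset.mpr hX'sub)
  · -- key subadditivity lemma
    have key : ∀ X ⊆ N1, ∀ Y ⊆ N2,
        f (X ∪ Y) ≤ f X + ∑ u ∈ Y, (f (X ∪ {u}) - f X) := by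
      intro X hX Y
      induction Y using Finset.induction with
      | empty => intro _; simp
      | @insert a Y' ha ih =>
        intro hins
        have hY' : Y' ⊆ N2 := (Finset.subset_insert _ _).trans hins
        have ha2 : ({a} : Finset α) ⊆ N2 := by
          intro x hx; simp at hx; subst hx; exact hins (Finset.mem_insert_self _ _)
        have hsub := hf_sub2 X hX Y' hY' {a} ha2
        have hint : Y' ∩ {a} = ∅ := by
          ext x; simp only [Finset.mem_inter, Finset.mem_singleton]
          constructor
          · rintro ⟨hx, rfl⟩; exact absurd hx ha
          · intro h; exact absurd h (Finset.notMem_empty x)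
        rw [hint, Finset.union_empty] at hsub
        have heq : X ∪ insert a Y' = X ∪ (Y' ∪ {a}) := by
          ext x; simp [Finset.mem_insert, or_comm, or_assoc, or_left_comm]
        rw [heq, Finset.sum_insert ha]
        have := ih hY'
        linarith
    -- sup over F2 of f(X ∪ Y) is at most g X
    have sup_le_g : ∀ X ⊆ N1, F2.sup' ⟨∅, hF2empty⟩ (fun Y => f (X ∪ Y)) ≤ g X := by
      intro X hX
      apply Finset.sup'_le
      intro Y hY
      have hYN2 := hF2sub Y hY
      have h1 := key X hX Y hYN2
      have hfX : 0 ≤ f X := hf_nonneg X (hX.trans Finset.subset_union_left)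
      have h2 : ∑ u ∈ Y, (f (X ∪ {u}) - f X) ≤ ∑ u ∈ Y, f (X ∪ {u}) := by
        apply Finset.sum_le_sum; intro i _; linarith
      have h3 : ∑ u ∈ Y, f (X ∪ {u}) ≤ ∑ u ∈ N2, f (X ∪ {u}) := by
        apply Finset.sum_le_sum_of_subset_of_nonneg hYN2
        intro i hi _
        apply hf_nonneg
        apply Finset.union_subset (hX.trans Finset.subset_union_left)
        intro x hx; simp at hx; subst hx; exact Finset.mem_union_right _ hi
      rw [hg]
      linarith
    -- pick minimizer X* for τ
    obtain ⟨Xs, hXs, hXseq⟩ := Finset.exists_mem_eq_inf' (⟨∅, Finset.empty_mem_powerset _⟩ :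
      N1.powerset.Nonempty) (fun X => F2.sup' ⟨∅, hF2empty⟩ (fun Y => f (X ∪ Y)))
    have hXsN1 : Xs ⊆ N1 := Finset.mem_powerset.mp hXs
    have hτeq : τ = F2.sup' ⟨∅, hF2empty⟩ (fun Y => f (Xs ∪ Y)) := by rw [hτ, hXseq]
    have hle_τ : ∀ Y ∈ F2, f (Xs ∪ Y) ≤ τ := by
      intro Y hY; rw [hτeq]; exact Finset.le_sup' (fun Y => f (Xs ∪ Y)) hY
    have hgXs : g Xs ≤ ((N2.card : ℝ) + 1) * τ := by
      rw [hg]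
      have h0 : f Xs ≤ τ := by
        have := hle_τ ∅ hF2empty
        rwa [Finset.union_empty] at this
      have h1 : ∑ u ∈ N2, f (Xs ∪ {u}) ≤ (N2.card : ℝ) * τ := by
        calc ∑ u ∈ N2, f (Xs ∪ {u}) ≤ ∑ _u ∈ N2, τ := by
              apply Finset.sum_le_sum; intro u hu; exact hle_τ {u} (hF2single u hu)
          _ = (N2.card : ℝ) * τ := by rw [Finset.sum_const, nsmul_eq_mul]
      linarith
    calc F2.sup' ⟨∅, hF2empty⟩ (fun Y => f (X' ∪ Y)) ≤ g X' := sup_le_g X' hX'sub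
      _ ≤ g Xs := hX'min Xs hXsN1
      _ ≤ ((N2.card : ℝ) + 1) * τ := hgXs
end

section
/- Let g : 2^N → ℝ≥0 be a non-negative submodular function on a finite set N, let A, B ⊆ N, and let A(p) and B(q) be independent random subsets of A and B respectively, where A(p) contains each element of A with probability p (not necessarily independently across elements) and B(q) contains each element of B with probability q. Then E[g(A(p) ∪ B(q))] ≥ (1-p)(1-q)·g(∅) + p(1-q)·g(A) + (1-p)q·g(B) + pq·g(A ∪ B). -/
open Finset

lemma sample_lemma_aux {α : Type*} [DecidableEq α] (N : Finset α) (g : Finset α → ℝ)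
    (hg_sub : ∀ S ⊆ N, ∀ T ⊆ N, g (S ∪ T) + g (S ∩ T) ≤ g S + g T)
    (p : ℝ) :
    ∀ (A : Finset α), A ⊆ N → ∀ (w : Finset α → ℝ), (∀ S, 0 ≤ w S) →
      (∑ S ∈ A.powerset, w S = 1) →
      (∀ a ∈ A, ∑ S ∈ A.powerset, (if a ∈ S then w S else 0) = p) →
      (1 - p) * g ∅ + p * g A ≤ ∑ S ∈ A.powerset, w S * g S := by
  intro A
  induction A using Finset.induction_on with
  | empty =>
      intro _ w hw hwt hwm
      simp only [Finset.powerset_empty, Finset.sum_singleton] at hwt ⊢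
      rw [hwt]
      ring_nf
      linarith
  | @insert a s ha IH =>
      intro hAN w hw hwt hwm
      have hsN : s ⊆ N := (Finset.subset_insert a s).trans hAN
      have hdisj : Disjoint s.powerset (s.powerset.image (insert a)) := by
        rw [Finset.disjoint_left]
        intro S hS hS'
        obtain ⟨S', _, rfl⟩ := Finset.mem_image.mp hS'
        exact ha (Finset.mem_powerset.mp hS (Finset.mem_insert_self a S'))
      have hinj : ∀ x ∈ s.powerset, ∀ y ∈ s.powerset, insert a x = insert a y → x = y := by
        intro x hx y hy hxy
        have hax : a ∉ x := fun h => ha (Finset.mem_powerset.mp hx h)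
        have hay : a ∉ y := fun h => ha (Finset.mem_powerset.mp hy h)
        rw [← Finset.erase_insert hax, ← Finset.erase_insert hay, hxy]
      have hsplit : ∀ f : Finset α → ℝ,
          ∑ S ∈ (insert a s).powerset, f S
            = ∑ S ∈ s.powerset, f S + ∑ S ∈ s.powerset, f (insert a S) := by
        intro f
        rw [Finset.powerset_insert, Finset.sum_union hdisj, Finset.sum_image hinj]
      -- mass of a
      have hpa : ∑ S ∈ s.powerset, w (insert a S) = p := by
        have hma := hwm a (Finset.mem_insert_self a s)
        rw [hsplit (fun S => if a ∈ S then w S else 0)] at hma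
        have h1 : ∑ S ∈ s.powerset, (if a ∈ S then w S else 0) = 0 := by
          apply Finset.sum_eq_zero
          intro S hS
          have : a ∉ S := fun h => ha (Finset.mem_powerset.mp hS h)
          simp [this]
        have h2 : ∑ S ∈ s.powerset, (if a ∈ insert a S then w (insert a S) else 0)
            = ∑ S ∈ s.powerset, w (insert a S) := by
          apply Finset.sum_congr rfl; intro S _; simp
        rw [h1, h2] at hma
        linarith
      -- merged weight on powerset of s
      have hIH : (1 - p) * g ∅ + p * g s
          ≤ ∑ S ∈ s.powerset, (w S + w (insert a S)) * g S := by
        apply IH hsN (fun S => w S + w (insert a S))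
          (fun S => add_nonneg (hw S) (hw (insert a S)))
        · have := hwt
          rw [hsplit w] at this
          rw [Finset.sum_add_distrib]
          exact this
        · intro b hb
          have hba : b ≠ a := fun h => ha (h ▸ hb)
          have hmb := hwm b (Finset.mem_insert_of_mem hb)
          rw [hsplit (fun S => if b ∈ S then w S else 0)] at hmb
          have h2 : ∑ S ∈ s.powerset, (if b ∈ insert a S then w (insert a S) else 0)
              = ∑ S ∈ s.powerset, (if b ∈ S then w (insert a S) else 0) := by
            apply Finset.sum_congr rfl
            intro S _
            simp [Finset.mem_insert, hba]
          rw [h2, ← Finset.sum_add_distrib] at hmb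
          rw [← hmb]
          apply Finset.sum_congr rfl
          intro S _
          by_cases hbS : b ∈ S <;> simp [hbS]
      -- pointwise submodular bound
      have hpt : ∀ S ∈ s.powerset,
          w (insert a S) * (g S + (g (insert a s) - g s))
            ≤ w (insert a S) * g (insert a S) := by
        intro S hS
        have hSs : S ⊆ s := Finset.mem_powerset.mp hS
        have hu : insert a S ∪ s = insert a s := by
          ext x
          simp only [Finset.mem_union, Finset.mem_insert]
          constructor
          · rintro ((rfl | h) | h)
            · exact Or.inl rfl
            · exact Or.inr (hSs h)
            · exact Or.inr h
          · rintro (rfl | h)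
            · exact Or.inl (Or.inl rfl)
            · exact Or.inr h
        have hi : insert a S ∩ s = S := by
          ext x
          simp only [Finset.mem_inter, Finset.mem_insert]
          constructor
          · rintro ⟨rfl | h, hx⟩
            · exact absurd hx ha
            · exact h
          · intro h
            exact ⟨Or.inr h, hSs h⟩
        have hsub := hg_sub (insert a S) ((Finset.insert_subset_insert a hSs).trans hAN)
          s hsN
        rw [hu, hi] at hsub
        apply mul_le_mul_of_nonneg_left _ (hw (insert a S))
        linarith
      -- combine
      rw [hsplit (fun S => w S * g S)]
      have hge : ∑ S ∈ s.powerset, w (insert a S) * (g S + (g (insert a s) - g s))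
          ≤ ∑ S ∈ s.powerset, w (insert a S) * g (insert a S) :=
        Finset.sum_le_sum hpt
      have hexp : ∑ S ∈ s.powerset, w S * g S
            + ∑ S ∈ s.powerset, w (insert a S) * (g S + (g (insert a s) - g s))
          = ∑ S ∈ s.powerset, (w S + w (insert a S)) * g S
            + p * (g (insert a s) - g s) := by
        rw [← hpa, Finset.sum_mul, ← Finset.sum_add_distrib, ← Finset.sum_add_distrib]
        apply Finset.sum_congr rfl
        intro S _
        ring
      linarith

/-- sampling lemma: For `g` non-negative submodular on `2^N`, `A, B ⊆ N`, and
independent random subsets `A(p)` of `A` and `B(q)` of `B` (modelled by probability weights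
`wA` on `2^A` and `wB` on `2^B` with element marginals `p` and `q` respectively; independence
of `A(p)` and `B(q)` is captured by the product weights in the expectation),
`E[g(A(p) ∪ B(q))] ≥ (1-p)(1-q)·g(∅) + p(1-q)·g(A) + (1-p)q·g(B) + pq·g(A ∪ B)`. -/
theorem stmt_4 {α : Type*} [DecidableEq α] (N : Finset α) (g : Finset α → ℝ)
    (hg_nonneg : ∀ S ⊆ N, 0 ≤ g S)
    (hg_sub : ∀ S ⊆ N, ∀ T ⊆ N, g (S ∪ T) + g (S ∩ T) ≤ g S + g T)
    (A B : Finset α) (hA : A ⊆ N) (hB : B ⊆ N)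
    (p q : ℝ) (hp : p ∈ Set.Icc (0 : ℝ) 1) (hq : q ∈ Set.Icc (0 : ℝ) 1)
    (wA wB : Finset α → ℝ)
    (hwA_nonneg : ∀ S, 0 ≤ wA S) (hwB_nonneg : ∀ T, 0 ≤ wB T)
    (hwA_total : ∑ S ∈ A.powerset, wA S = 1) (hwB_total : ∑ T ∈ B.powerset, wB T = 1)
    (hwA_marg : ∀ a ∈ A, ∑ S ∈ A.powerset, (if a ∈ S then wA S else 0) = p)
    (hwB_marg : ∀ b ∈ B, ∑ T ∈ B.powerset, (if b ∈ T then wB T else 0) = q) :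
    (1 - p) * (1 - q) * g ∅ + p * (1 - q) * g A + (1 - p) * q * g B + p * q * g (A ∪ B) ≤
      ∑ S ∈ A.powerset, ∑ T ∈ B.powerset, wA S * wB T * g (S ∪ T) := by
  obtain ⟨hp0, hp1⟩ := hp
  obtain ⟨hq0, hq1⟩ := hq
  -- step 1: conditioned on T, lower bound inner expectation
  have key1 : ∀ T ∈ B.powerset,
      (1 - p) * g T + p * g (A ∪ T) ≤ ∑ S ∈ A.powerset, wA S * g (S ∪ T) := by
    intro T hT
    have hTN : T ⊆ N := (Finset.mem_powerset.mp hT).trans hB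
    have hsub' : ∀ S ⊆ N, ∀ S' ⊆ N,
        (fun S => g (S ∪ T)) (S ∪ S') + (fun S => g (S ∪ T)) (S ∩ S')
          ≤ (fun S => g (S ∪ T)) S + (fun S => g (S ∪ T)) S' := by
      intro S hS S' hS'
      have h := hg_sub (S ∪ T) (Finset.union_subset hS hTN)
        (S' ∪ T) (Finset.union_subset hS' hTN)
      have hu : (S ∪ T) ∪ (S' ∪ T) = (S ∪ S') ∪ T := by
        ext x; simp only [Finset.mem_union]; tauto
      have hi : (S ∪ T) ∩ (S' ∪ T) = (S ∩ S') ∪ T := by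
        ext x; simp only [Finset.mem_union, Finset.mem_inter]; tauto
      rw [hu, hi] at h
      simpa using h
    have := sample_lemma_aux N (fun S => g (S ∪ T)) hsub' p A hA wA
      hwA_nonneg hwA_total hwA_marg
    simpa using this
  -- swap sums
  have hswap : ∑ S ∈ A.powerset, ∑ T ∈ B.powerset, wA S * wB T * g (S ∪ T)
      = ∑ T ∈ B.powerset, wB T * ∑ S ∈ A.powerset, wA S * g (S ∪ T) := by
    rw [Finset.sum_comm]
    apply Finset.sum_congr rfl
    intro T _
    rw [Finset.mul_sum]
    apply Finset.sum_congr rfl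
    intro S _
    ring
  have step1 : ∑ T ∈ B.powerset, wB T * ((1 - p) * g T + p * g (A ∪ T))
      ≤ ∑ S ∈ A.powerset, ∑ T ∈ B.powerset, wA S * wB T * g (S ∪ T) := by
    rw [hswap]
    apply Finset.sum_le_sum
    intro T hT
    exact mul_le_mul_of_nonneg_left (key1 T hT) (hwB_nonneg T)
  have hexp : ∑ T ∈ B.powerset, wB T * ((1 - p) * g T + p * g (A ∪ T))
      = (1 - p) * ∑ T ∈ B.powerset, wB T * g T
        + p * ∑ T ∈ B.powerset, wB T * g (A ∪ T) := by
    rw [Finset.mul_sum, Finset.mul_sum, ← Finset.sum_add_distrib]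
    apply Finset.sum_congr rfl
    intro T _
    ring
  -- step 2a : expectation of g(T)
  have step2a : (1 - q) * g ∅ + q * g B ≤ ∑ T ∈ B.powerset, wB T * g T :=
    sample_lemma_aux N g hg_sub q B hB wB hwB_nonneg hwB_total hwB_marg
  -- step 2b : expectation of g(A ∪ T)
  have step2b : (1 - q) * g A + q * g (A ∪ B)
      ≤ ∑ T ∈ B.powerset, wB T * g (A ∪ T) := by
    have hsub' : ∀ T ⊆ N, ∀ T' ⊆ N,
        (fun T => g (A ∪ T)) (T ∪ T') + (fun T => g (A ∪ T)) (T ∩ T')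
          ≤ (fun T => g (A ∪ T)) T + (fun T => g (A ∪ T)) T' := by
      intro T hT T' hT'
      have h := hg_sub (A ∪ T) (Finset.union_subset hA hT)
        (A ∪ T') (Finset.union_subset hA hT')
      have hu : (A ∪ T) ∪ (A ∪ T') = A ∪ (T ∪ T') := by
        ext x; simp only [Finset.mem_union]; tauto
      have hi : (A ∪ T) ∩ (A ∪ T') = A ∪ (T ∩ T') := by
        ext x; simp only [Finset.mem_union, Finset.mem_inter]; tauto
      rw [hu, hi] at h
      simpa using h
    have := sample_lemma_aux N (fun T => g (A ∪ T)) hsub' q B hB wB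
      hwB_nonneg hwB_total hwB_marg
    simpa using this
  have h1p : (0:ℝ) ≤ 1 - p := by linarith
  have c1 : (1 - p) * ((1 - q) * g ∅ + q * g B)
      ≤ (1 - p) * ∑ T ∈ B.powerset, wB T * g T :=
    mul_le_mul_of_nonneg_left step2a h1p
  have c2 : p * ((1 - q) * g A + q * g (A ∪ B))
      ≤ p * ∑ T ∈ B.powerset, wB T * g (A ∪ T) :=
    mul_le_mul_of_nonneg_left step2b hp0
  nlinarith [step1, hexp, c1, c2]
end

section
/- Let f : 2^(N1 ⊔ N2) → ℝ≥0 be non-negative and submodular when restricted to N2. For X ⊆ N1, define h(X) = E[f(X ∪ R)], where R is a uniformly random subset of N2 (each element included independently with probability 1/2). Then max over Y ⊆ N2 of f(X ∪ Y) ≤ 4·h(X). -/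
open Finset

/-- Reindexing a sum over the powerset by an involution. -/
lemma sum_powerset_invol {α : Type*} [DecidableEq α] (N2 : Finset α) (F : Finset α → ℝ)
    (g : Finset α → Finset α) (hmem : ∀ R ⊆ N2, g R ⊆ N2)
    (hinv : ∀ R ⊆ N2, g (g R) = R) :
    ∑ R ∈ N2.powerset, F (g R) = ∑ R ∈ N2.powerset, F R := by
  apply Finset.sum_nbij' (i := g) (j := g)
  · intro a ha; exact Finset.mem_powerset.mpr (hmem a (Finset.mem_powerset.mp ha))
  · intro a ha; exact Finset.mem_powerset.mpr (hmem a (Finset.mem_powerset.mp ha))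
  · intro a ha; exact hinv a (Finset.mem_powerset.mp ha)
  · intro a ha; exact hinv a (Finset.mem_powerset.mp ha)
  · intro a _; rfl

/-- For `f` non-negative and submodular when restricted to `N2`, and
`h(X) = E[f(X ∪ R)]` for `R` a uniformly random subset of `N2`,
`max_{Y ⊆ N2} f(X ∪ Y) ≤ 4·h(X)`. -/
theorem stmt_5 {α : Type*} [DecidableEq α] (N1 N2 : Finset α) (hdisj : Disjoint N1 N2)
    (f : Finset α → ℝ)
    (hf_nonneg : ∀ S ⊆ N1 ∪ N2, 0 ≤ f S)
    (hf_sub2 : ∀ X ⊆ N1, ∀ A ⊆ N2, ∀ B ⊆ N2,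
      f (X ∪ (A ∪ B)) + f (X ∪ (A ∩ B)) ≤ f (X ∪ A) + f (X ∪ B))
    (h : Finset α → ℝ)
    (hh : ∀ X : Finset α, h X = (1 / 2 ^ N2.card) * ∑ R ∈ N2.powerset, f (X ∪ R)) :
    ∀ X ⊆ N1, ∀ Y ⊆ N2, f (X ∪ Y) ≤ 4 * h X := by
  intro X hX Y hY
  have hXN : X ⊆ N1 ∪ N2 := hX.trans Finset.subset_union_left
  have hnn : ∀ S ⊆ N2, 0 ≤ f (X ∪ S) := fun S hS =>
    hf_nonneg _ (Finset.union_subset hXN (hS.trans Finset.subset_union_right))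
  -- the three nontrivial reindexing maps
  set g2 : Finset α → Finset α := fun R => (R ∩ Y) ∪ ((N2 \ Y) \ R) with hg2
  set g3 : Finset α → Finset α := fun R => (Y \ R) ∪ (R \ Y) with hg3
  set g4 : Finset α → Finset α := fun R => N2 \ R with hg4
  -- pointwise key inequality
  have key : ∀ R ⊆ N2,
      f (X ∪ Y) ≤ f (X ∪ R) + f (X ∪ g2 R) + f (X ∪ g3 R) + f (X ∪ g4 R) := by
    intro R hR
    set S := R ∩ Y with hS
    set S' := Y \ R with hS'
    have hSN : S ⊆ N2 := (Finset.inter_subset_right).trans hY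
    have hS'N : S' ⊆ N2 := (Finset.sdiff_subset).trans hY
    have e0 : S ∪ S' = Y := by
      ext a; simp only [hS, hS', Finset.mem_union, Finset.mem_inter, Finset.mem_sdiff]; tauto
    have e1 : S ∩ S' = ∅ := by
      ext a; simp only [hS, hS', Finset.mem_inter, Finset.mem_sdiff, Finset.notMem_empty]; tauto
    have h1 := hf_sub2 X hX S hSN S' hS'N
    rw [e0, e1, Finset.union_empty] at h1
    -- second inequality: with A = R, B = g2 R
    have hg2N : g2 R ⊆ N2 := by
      intro a ha
      simp only [hg2, Finset.mem_union, Finset.mem_inter, Finset.mem_sdiff] at ha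
      rcases ha with ⟨h1, _⟩ | ⟨⟨h1, _⟩, _⟩
      · exact hR h1
      · exact h1
    have e2 : R ∪ g2 R = S ∪ (N2 \ Y) := by
      ext a
      have haR : a ∈ R → a ∈ N2 := fun hm => hR hm
      simp only [hg2, hS, Finset.mem_union, Finset.mem_inter, Finset.mem_sdiff]; tauto
    have e3 : R ∩ g2 R = S := by
      ext a
      simp only [hg2, hS, Finset.mem_union, Finset.mem_inter, Finset.mem_sdiff]; tauto
    have h2 := hf_sub2 X hX R hR (g2 R) hg2N
    rw [e2, e3] at h2
    -- third inequality: with A = g3 R, B = g4 R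
    have hg3N : g3 R ⊆ N2 := by
      intro a ha
      simp only [hg3, Finset.mem_union, Finset.mem_sdiff] at ha
      rcases ha with ⟨h1, _⟩ | ⟨h1, _⟩
      · exact hY h1
      · exact hR h1
    have hg4N : g4 R ⊆ N2 := Finset.sdiff_subset
    have e4 : g3 R ∪ g4 R = S' ∪ (N2 \ Y) := by
      ext a
      have haR : a ∈ R → a ∈ N2 := fun hm => hR hm
      have haY : a ∈ Y → a ∈ N2 := fun hm => hY hm
      simp only [hg3, hg4, hS', Finset.mem_union, Finset.mem_sdiff]; tauto
    have e5 : g3 R ∩ g4 R = S' := by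
      ext a
      have haR : a ∈ R → a ∈ N2 := fun hm => hR hm
      have haY : a ∈ Y → a ∈ N2 := fun hm => hY hm
      simp only [hg3, hg4, hS', Finset.mem_union, Finset.mem_inter, Finset.mem_sdiff]; tauto
    have h3 := hf_sub2 X hX (g3 R) hg3N (g4 R) hg4N
    rw [e4, e5] at h3
    -- nonnegativity facts
    have n0 : 0 ≤ f X := hf_nonneg X hXN
    have n1 : 0 ≤ f (X ∪ (S ∪ (N2 \ Y))) :=
      hnn _ (Finset.union_subset hSN Finset.sdiff_subset)
    have n2 : 0 ≤ f (X ∪ (S' ∪ (N2 \ Y))) :=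
      hnn _ (Finset.union_subset hS'N Finset.sdiff_subset)
    linarith
  -- sum the pointwise inequality over all R
  have hsum : ∑ R ∈ N2.powerset, f (X ∪ Y) ≤
      ∑ R ∈ N2.powerset, (f (X ∪ R) + f (X ∪ g2 R) + f (X ∪ g3 R) + f (X ∪ g4 R)) :=
    Finset.sum_le_sum fun R hR => key R (Finset.mem_powerset.mp hR)
  have hg2mem : ∀ R ⊆ N2, g2 R ⊆ N2 := by
    intro R hR a ha
    simp only [hg2, Finset.mem_union, Finset.mem_inter, Finset.mem_sdiff] at ha
    rcases ha with ⟨h1, _⟩ | ⟨⟨h1, _⟩, _⟩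
    · exact hR h1
    · exact h1
  have hg3mem : ∀ R ⊆ N2, g3 R ⊆ N2 := by
    intro R hR a ha
    simp only [hg3, Finset.mem_union, Finset.mem_sdiff] at ha
    rcases ha with ⟨h1, _⟩ | ⟨h1, _⟩
    · exact hY h1
    · exact hR h1
  have hg4mem : ∀ R ⊆ N2, g4 R ⊆ N2 := fun R _ => Finset.sdiff_subset
  have hg2inv : ∀ R ⊆ N2, g2 (g2 R) = R := by
    intro R hR
    ext a
    have haR : a ∈ R → a ∈ N2 := fun hm => hR hm
    have haY : a ∈ Y → a ∈ N2 := fun hm => hY hm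
    simp only [hg2, Finset.mem_union, Finset.mem_inter, Finset.mem_sdiff]; tauto
  have hg3inv : ∀ R ⊆ N2, g3 (g3 R) = R := by
    intro R hR
    ext a
    simp only [hg3, Finset.mem_union, Finset.mem_sdiff]; tauto
  have hg4inv : ∀ R ⊆ N2, g4 (g4 R) = R := by
    intro R hR
    ext a
    have haR : a ∈ R → a ∈ N2 := fun hm => hR hm
    simp only [hg4, Finset.mem_sdiff]; tauto
  have r2 := sum_powerset_invol N2 (fun R => f (X ∪ R)) g2 hg2mem hg2inv
  have r3 := sum_powerset_invol N2 (fun R => f (X ∪ R)) g3 hg3mem hg3inv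
  have r4 := sum_powerset_invol N2 (fun R => f (X ∪ R)) g4 hg4mem hg4inv
  rw [Finset.sum_const, Finset.card_powerset, nsmul_eq_mul] at hsum
  have hsplit : ∑ R ∈ N2.powerset, (f (X ∪ R) + f (X ∪ g2 R) + f (X ∪ g3 R) + f (X ∪ g4 R))
      = 4 * ∑ R ∈ N2.powerset, f (X ∪ R) := by
    rw [Finset.sum_add_distrib, Finset.sum_add_distrib, Finset.sum_add_distrib, r2, r3, r4]
    ring
  rw [hsplit] at hsum
  have hpow : (0 : ℝ) < 2 ^ N2.card := by positivity
  have hcast : ((2 ^ N2.card : ℕ) : ℝ) = 2 ^ N2.card := by push_cast; ring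
  rw [hcast] at hsum
  rw [hh]
  calc f (X ∪ Y) = (2 ^ N2.card * f (X ∪ Y)) / 2 ^ N2.card := by field_simp
    _ ≤ (4 * ∑ R ∈ N2.powerset, f (X ∪ R)) / 2 ^ N2.card := by gcongr
    _ = 4 * (1 / 2 ^ N2.card * ∑ R ∈ N2.powerset, f (X ∪ R)) := by ring
end

section
/- Let g_1, ..., g_m : 2^(N2) → ℝ≥0 be non-negative submodular functions on a finite ground set N2 disjoint from [m-1]. Let M ≥ 2·max_{i,Y} g_i(Y). For X ⊆ [m-1], define c(X) = max{i ∈ ℕ∪{0} : [i] ⊆ X}, and for X ⊆ [m-1], Y ⊆ N2 define f(X ∪ Y) = g_{c(X)+1}(Y) + (|X| - c(X))·M. Then for every fixed Y ⊆ N2, the function X ↦ f(X ∪ Y) is submodular on 2^([m-1]). -/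
open Finset

private lemma cf_bdd (X : Finset ℕ) : BddAbove {i : ℕ | Icc 1 i ⊆ X} := by
  refine ⟨X.card, fun i hi => ?_⟩
  have := Finset.card_le_card hi
  simpa [Nat.card_Icc] using this

private lemma cf_spec (X : Finset ℕ) : Icc 1 (sSup {i : ℕ | Icc 1 i ⊆ X}) ⊆ X := by
  have h0 : (0:ℕ) ∈ {i : ℕ | Icc 1 i ⊆ X} := by simp
  exact Nat.sSup_mem ⟨0, h0⟩ (cf_bdd X)

private lemma cf_le (X : Finset ℕ) {i : ℕ} (h : Icc 1 i ⊆ X) :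
    i ≤ sSup {i : ℕ | Icc 1 i ⊆ X} := le_csSup (cf_bdd X) h

private lemma cf_mono {S T : Finset ℕ} (h : S ⊆ T) :
    sSup {i : ℕ | Icc 1 i ⊆ S} ≤ sSup {i : ℕ | Icc 1 i ⊆ T} :=
  cf_le T ((cf_spec S).trans h)

private lemma cf_insert_eq {X : Finset ℕ} {u : ℕ} (hu : u ∉ X)
    (hne : u ≠ sSup {i : ℕ | Icc 1 i ⊆ X} + 1) :
    sSup {i : ℕ | Icc 1 i ⊆ insert u X} = sSup {i : ℕ | Icc 1 i ⊆ X} := by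
  refine le_antisymm ?_ (cf_mono (subset_insert u X))
  set k := sSup {i : ℕ | Icc 1 i ⊆ insert u X} with hk
  have hks : Icc 1 k ⊆ insert u X := cf_spec _
  have hunotmem : u ∉ Icc 1 k := by
    intro hmem
    rw [mem_Icc] at hmem
    -- u ≥ 1, u ≤ k.  Show Icc 1 (u-1) ⊆ X
    have h1 : Icc 1 (u - 1) ⊆ X := by
      intro j hj
      rw [mem_Icc] at hj
      have hju : j < u := lt_of_le_of_lt hj.2 (Nat.sub_lt (lt_of_lt_of_le Nat.zero_lt_one hmem.1) Nat.zero_lt_one)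
      have : j ∈ insert u X := hks (mem_Icc.mpr ⟨hj.1, le_trans (le_of_lt hju) hmem.2⟩)
      rcases mem_insert.mp this with h | h
      · omega
      · exact h
    have h2 : u - 1 ≤ sSup {i : ℕ | Icc 1 i ⊆ X} := cf_le X h1
    have h3 : ¬ (u ≤ sSup {i : ℕ | Icc 1 i ⊆ X}) := by
      intro hle
      exact hu (cf_spec X (mem_Icc.mpr ⟨hmem.1, hle⟩))
    omega
  refine cf_le X fun j hj => ?_
  rcases mem_insert.mp (hks hj) with h | h
  · exact absurd (h ▸ hj) hunotmem
  · exact h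

private lemma cf_insert_jump {X : Finset ℕ} {u : ℕ}
    (hue : u = sSup {i : ℕ | Icc 1 i ⊆ X} + 1) :
    sSup {i : ℕ | Icc 1 i ⊆ X} + 1 ≤ sSup {i : ℕ | Icc 1 i ⊆ insert u X} := by
  refine cf_le _ fun j hj => ?_
  rw [mem_Icc] at hj
  rcases eq_or_lt_of_le hj.2 with h | h
  · exact mem_insert.mpr (Or.inl (by omega))
  · exact mem_insert.mpr (Or.inr (cf_spec X (mem_Icc.mpr ⟨hj.1, by omega⟩)))

private lemma cf_bound {m : ℕ} {X : Finset ℕ} (hX : X ⊆ Icc 1 (m - 1)) :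
    sSup {i : ℕ | Icc 1 i ⊆ X} ≤ m - 1 := by
  set k := sSup {i : ℕ | Icc 1 i ⊆ X}
  rcases Nat.eq_zero_or_pos k with h | h
  · omega
  · have : k ∈ Icc 1 (m-1) := hX (cf_spec X (mem_Icc.mpr ⟨h, le_refl k⟩))
    exact (mem_Icc.mp this).2

/-- With `c(X) = max{i : [i] ⊆ X}` and
`f(X ∪ Y) = g_{c(X)+1}(Y) + (|X| - c(X))·M` (represented by `F X Y` since `X ⊆ [m-1]` and
`Y ⊆ N2` are disjoint), for every fixed `Y ⊆ N2` the function `X ↦ F X Y` is submodular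
on `2^([m-1])` (decreasing marginals form). -/
theorem stmt_6 {α : Type*} [DecidableEq α] (N2 : Finset α) (m : ℕ) (hm : 1 ≤ m)
    (g : ℕ → Finset α → ℝ)
    (hg_nonneg : ∀ i ∈ Icc 1 m, ∀ Y ⊆ N2, 0 ≤ g i Y)
    (hg_sub : ∀ i ∈ Icc 1 m, ∀ A ⊆ N2, ∀ B ⊆ N2,
      g i (A ∪ B) + g i (A ∩ B) ≤ g i A + g i B)
    (M : ℝ) (hM : ∀ i ∈ Icc 1 m, ∀ Y ⊆ N2, 2 * g i Y ≤ M)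
    (c : Finset ℕ → ℕ) (hc : ∀ X : Finset ℕ, c X = sSup {i : ℕ | Icc 1 i ⊆ X})
    (F : Finset ℕ → Finset α → ℝ)
    (hF : ∀ X : Finset ℕ, ∀ Y : Finset α,
      F X Y = g (c X + 1) Y + ((X.card : ℝ) - c X) * M) :
    ∀ Y ⊆ N2, ∀ S T : Finset ℕ, S ⊆ T → T ⊆ Icc 1 (m - 1) →
      ∀ u ∈ Icc 1 (m - 1), u ∉ T →
        F (insert u T) Y - F T Y ≤ F (insert u S) Y - F S Y := by
  intro Y hY S T hST hT u hu huT
  have huS : u ∉ S := fun h => huT (hST h)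
  have hu1 : 1 ≤ u := (mem_Icc.mp hu).1
  have hu2 : u ≤ m - 1 := (mem_Icc.mp hu).2
  have hS' : S ⊆ Icc 1 (m - 1) := hST.trans hT
  have hiT : insert u T ⊆ Icc 1 (m - 1) := insert_subset hu hT
  have hiS : insert u S ⊆ Icc 1 (m - 1) := insert_subset hu hS'
  have hM0 : 0 ≤ M := by
    have h1 : (1 : ℕ) ∈ Icc 1 m := mem_Icc.mpr ⟨le_refl 1, hm⟩
    have := hM 1 h1 ∅ (empty_subset N2)
    have := hg_nonneg 1 h1 ∅ (empty_subset N2)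
    linarith
  have hcST : c S ≤ c T := by rw [hc, hc]; exact cf_mono hST
  have hcT : c T ≤ m - 1 := by rw [hc]; exact cf_bound hT
  have hcS : c S ≤ m - 1 := by rw [hc]; exact cf_bound hS'
  have haT : c (insert u T) ≤ m - 1 := by rw [hc]; exact cf_bound hiT
  have haS : c (insert u S) ≤ m - 1 := by rw [hc]; exact cf_bound hiS
  have hab : c (insert u S) ≤ c (insert u T) := by
    rw [hc, hc]; exact cf_mono (insert_subset_insert u hST)
  have hcardT : ((insert u T).card : ℝ) = (T.card : ℝ) + 1 := by
    rw [card_insert_of_notMem huT]; push_cast; ring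
  have hcardS : ((insert u S).card : ℝ) = (S.card : ℝ) + 1 := by
    rw [card_insert_of_notMem huS]; push_cast; ring
  have hgnn : ∀ k : ℕ, k ≤ m - 1 → 0 ≤ g (k + 1) Y := fun k hk =>
    hg_nonneg (k + 1) (mem_Icc.mpr ⟨by omega, by omega⟩) Y hY
  have hgM : ∀ k : ℕ, k ≤ m - 1 → 2 * g (k + 1) Y ≤ M := fun k hk =>
    hM (k + 1) (mem_Icc.mpr ⟨by omega, by omega⟩) Y hY
  rw [hF, hF, hF, hF, hcardT, hcardS]
  by_cases hTe : u = c T + 1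
  · by_cases hSe : u = c S + 1
    · -- both jump; c S = c T
      have hST' : c S = c T := by omega
      have hbS : c S + 1 ≤ c (insert u S) := by
        simp only [hc] at hSe ⊢; exact cf_insert_jump hSe
      rcases eq_or_lt_of_le hab with h | h
      · rw [h, hST']; ring_nf; linarith
      · have h1 : 2 * g (c (insert u T) + 1) Y ≤ M := hgM _ haT
        have h2 : 0 ≤ g (c (insert u S) + 1) Y := hgnn _ haS
        have h3 : (c (insert u S) : ℝ) + 1 ≤ (c (insert u T) : ℝ) := by
          exact_mod_cast h
        rw [hST']
        nlinarith [mul_le_mul_of_nonneg_right (by linarith : (1:ℝ) ≤ (c (insert u T) : ℝ) - (c (insert u S) : ℝ)) hM0]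
    · -- T jumps, S doesn't
      have hbeq : c (insert u S) = c S := by
        rw [hc, hc]; rw [hc] at hSe; exact cf_insert_eq huS hSe
      have haT' : c T + 1 ≤ c (insert u T) := by
        simp only [hc] at hTe ⊢; exact cf_insert_jump hTe
      have h1 : 2 * g (c (insert u T) + 1) Y ≤ M := hgM _ haT
      have h2 : 0 ≤ g (c T + 1) Y := hgnn _ hcT
      have h3 : (c T : ℝ) + 1 ≤ (c (insert u T) : ℝ) := by exact_mod_cast haT'
      rw [hbeq]
      nlinarith [mul_le_mul_of_nonneg_right (by linarith : (0:ℝ) ≤ (c (insert u T) : ℝ) - (c T : ℝ) - 1) hM0]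
  · -- T doesn't jump; then S doesn't either
    have hSe : u ≠ c S + 1 := by
      intro hSe
      have hlt : c S < c T := by omega
      have hsub : Icc 1 (c T) ⊆ T := by rw [hc]; exact cf_spec T
      exact huT (hsub (mem_Icc.mpr ⟨hu1, by omega⟩))
    have haeq : c (insert u T) = c T := by
      rw [hc, hc]; rw [hc] at hTe; exact cf_insert_eq huT hTe
    have hbeq : c (insert u S) = c S := by
      rw [hc, hc]; rw [hc] at hSe; exact cf_insert_eq huS hSe
    rw [haeq, hbeq]; ring_nf; linarith
end

section
/- Let g_1, ..., g_m : 2^(N2) → ℝ≥0 be non-negative submodular functions, let M ≥ 2·max_{i,Y} g_i(Y), define c(X) = max{i : [i] ⊆ X} for X ⊆ [m-1], and f(X ∪ Y) = g_{c(X)+1}(Y) + (|X| - c(X))·M for X ⊆ [m-1], Y ⊆ N2. Then for every set Y ⊆ N2, min over X ⊆ [m-1] of f(X ∪ Y) equals min over 1 ≤ i ≤ m of g_i(Y). -/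
open Finset

lemma aux_sSup_Icc (n : ℕ) : sSup {i : ℕ | Icc 1 i ⊆ Icc 1 n} = n := by
  have h : {i : ℕ | Icc 1 i ⊆ Icc 1 n} = Set.Iic n := by
    ext j
    simp only [Set.mem_setOf_eq, Set.mem_Iic]
    constructor
    · intro hj
      rcases Nat.eq_zero_or_pos j with h0 | hpos
      · omega
      · have := hj (mem_Icc.mpr ⟨hpos, le_refl j⟩)
        exact (mem_Icc.mp this).2
    · intro hj
      exact Finset.Icc_subset_Icc_right hj
  rw [h, csSup_Iic]

lemma aux_sSup_le (X : Finset ℕ) (k : ℕ) (hk : ∀ i, Icc 1 i ⊆ X → i ≤ k) :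
    sSup {i : ℕ | Icc 1 i ⊆ X} ≤ k := by
  apply csSup_le ⟨0, by simp⟩
  exact hk

/-- With `c(X) = max{i : [i] ⊆ X}` and
`f(X ∪ Y) = g_{c(X)+1}(Y) + (|X| - c(X))·M` (represented by `F X Y`), for every `Y ⊆ N2`,
`min_{X ⊆ [m-1]} f(X ∪ Y) = min_{1 ≤ i ≤ m} g_i(Y)`. -/
theorem stmt_7 {α : Type*} [DecidableEq α] (N2 : Finset α) (m : ℕ) (hm : 1 ≤ m)
    (g : ℕ → Finset α → ℝ)
    (hg_nonneg : ∀ i ∈ Icc 1 m, ∀ Y ⊆ N2, 0 ≤ g i Y)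
    (hg_sub : ∀ i ∈ Icc 1 m, ∀ A ⊆ N2, ∀ B ⊆ N2,
      g i (A ∪ B) + g i (A ∩ B) ≤ g i A + g i B)
    (M : ℝ) (hM : ∀ i ∈ Icc 1 m, ∀ Y ⊆ N2, 2 * g i Y ≤ M)
    (c : Finset ℕ → ℕ) (hc : ∀ X : Finset ℕ, c X = sSup {i : ℕ | Icc 1 i ⊆ X})
    (F : Finset ℕ → Finset α → ℝ)
    (hF : ∀ X : Finset ℕ, ∀ Y : Finset α,
      F X Y = g (c X + 1) Y + ((X.card : ℝ) - c X) * M) :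
    ∀ Y ⊆ N2,
      (Icc 1 (m - 1)).powerset.inf' ⟨∅, Finset.empty_mem_powerset _⟩ (fun X => F X Y) =
        (Icc 1 m).inf' (by simp [hm]) (fun i => g i Y) := by
  intro Y hY
  have h1m : (1:ℕ) ∈ Icc 1 m := by simp [hm]
  have hM0 : 0 ≤ M := by
    have h2 := hM 1 h1m ∅ (empty_subset _)
    have h3 := hg_nonneg 1 h1m ∅ (empty_subset _)
    linarith
  apply le_antisymm
  · apply le_inf'
    intro i hi
    simp only [mem_Icc] at hi
    have hXm : Icc 1 (i-1) ∈ (Icc 1 (m-1)).powerset := by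
      rw [mem_powerset]
      exact Finset.Icc_subset_Icc_right (Nat.sub_le_sub_right hi.2 1)
    refine le_trans (inf'_le _ hXm) ?_
    have hcX : c (Icc 1 (i-1)) = i - 1 := by rw [hc]; exact aux_sSup_Icc _
    rw [hF, hcX]
    have : i - 1 + 1 = i := by omega
    rw [this, Nat.card_Icc]
    simp
  · apply le_inf'
    intro X hX
    rw [mem_powerset] at hX
    have hcard : c X ≤ X.card := by
      rw [hc]
      apply aux_sSup_le
      intro i hi
      have := card_le_card hi
      rwa [Nat.card_Icc, Nat.add_sub_cancel] at this
    have hcm : c X ≤ m - 1 := by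
      rw [hc]
      apply aux_sSup_le
      intro i hi
      rcases Nat.eq_zero_or_pos i with h0 | hpos
      · omega
      · have := hX (hi (mem_Icc.mpr ⟨hpos, le_refl i⟩))
        exact (mem_Icc.mp this).2
    have hmem : c X + 1 ∈ Icc 1 m := mem_Icc.mpr ⟨by omega, by omega⟩
    refine le_trans (inf'_le _ hmem) ?_
    rw [hF]
    have : 0 ≤ ((X.card : ℝ) - c X) * M := by
      apply mul_nonneg _ hM0
      have : (c X : ℝ) ≤ X.card := by exact_mod_cast hcard
      linarith
    linarith
end

section
/- For a CNF formula φ with n variables x_1,...,x_n and ℓ clauses, define on ground set [2n] the functions g_i(Y) = |{2i-1, 2i} ∩ Y| mod 2 for 1 ≤ i ≤ n, and g_{n+j}(Y) = max_{i ∈ Y} c_j(x_{⌈i/2⌉} = i mod 2) for 1 ≤ j ≤ ℓ, where c_j(x_t = v) is 1 if assigning value v to variable x_t satisfies clause c_j, and 0 otherwise (with max over the empty set being 0). Then max over Y ⊆ [2n] of min over 1 ≤ i ≤ n+ℓ of g_i(Y) equals 1 if φ is satisfiable, and 0 otherwise. -/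
open Finset

open scoped Classical in
/-- For a CNF formula `φ` with `n` variables and `ℓ` clauses (where
`c j t v = true` iff assigning value `v` to variable `x_t` satisfies clause `j`), define on
ground set `[2n]` the functions `g_i(Y) = |{2i-1, 2i} ∩ Y| mod 2` for `1 ≤ i ≤ n` and
`g_{n+j}(Y) = max_{i ∈ Y} c_j(x_{⌈i/2⌉} = i mod 2)` for `1 ≤ j ≤ ℓ`. Then
`max_{Y ⊆ [2n]} min_{1 ≤ i ≤ n+ℓ} g_i(Y)` equals `1` if `φ` is satisfiable and `0` otherwise. -/
theorem stmt_9 (n ℓ : ℕ) (hn : 1 ≤ n) (c : ℕ → ℕ → Bool → Bool)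
    (g : ℕ → Finset ℕ → ℝ)
    (hg1 : ∀ i ∈ Icc 1 n, ∀ Y : Finset ℕ,
      g i Y = ((({2 * i - 1, 2 * i} : Finset ℕ) ∩ Y).card % 2 : ℕ))
    (hg2 : ∀ j ∈ Icc 1 ℓ, ∀ Y : Finset ℕ,
      g (n + j) Y = if ∃ i ∈ Y, c j ((i + 1) / 2) (i % 2 == 1) = true then 1 else 0) :
    (Icc 1 (2 * n)).powerset.sup' ⟨∅, Finset.empty_mem_powerset _⟩
        (fun Y => (Icc 1 (n + ℓ)).inf' (Finset.nonempty_Icc.mpr (by omega))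
          (fun i => g i Y)) =
      if ∃ a : ℕ → Bool, ∀ j ∈ Icc 1 ℓ, ∃ t ∈ Icc 1 n, c j t (a t) = true then 1 else 0 := by
  have hgnonneg : ∀ i ∈ Icc 1 (n + ℓ), ∀ Y : Finset ℕ, 0 ≤ g i Y := by
    intro i hi Y
    rw [mem_Icc] at hi
    by_cases hin : i ≤ n
    · rw [hg1 i (mem_Icc.mpr ⟨hi.1, hin⟩) Y]
      positivity
    · have hj : i = n + (i - n) := by omega
      rw [hj, hg2 (i - n) (mem_Icc.mpr ⟨by omega, by omega⟩) Y]
      split <;> norm_num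
  split_ifs with hsat
  · obtain ⟨a, ha⟩ := hsat
    apply le_antisymm
    · apply Finset.sup'_le
      intro Y _
      have h1 : (1 : ℕ) ∈ Icc 1 (n + ℓ) := mem_Icc.mpr ⟨le_refl _, by omega⟩
      calc (Icc 1 (n + ℓ)).inf' _ (fun i => g i Y) ≤ g 1 Y := Finset.inf'_le _ h1
        _ ≤ 1 := by
            rw [hg1 1 (mem_Icc.mpr ⟨le_refl _, hn⟩) Y]
            have h2 : (({2 * 1 - 1, 2 * 1} : Finset ℕ) ∩ Y).card % 2 ≤ 1 := by omega
            exact_mod_cast h2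
    · set Y := (Icc 1 n).image (fun t => if a t then 2 * t - 1 else 2 * t) with hYdef
      have hYmem : Y ∈ (Icc 1 (2 * n)).powerset := by
        rw [Finset.mem_powerset]
        intro x hx
        rw [hYdef, Finset.mem_image] at hx
        obtain ⟨t, ht, hxt⟩ := hx
        rw [mem_Icc] at ht
        rw [mem_Icc]
        split at hxt <;> omega
      have hmemY : ∀ x, x ∈ Y ↔ ∃ t, 1 ≤ t ∧ t ≤ n ∧ (if a t then 2 * t - 1 else 2 * t) = x := by
        intro x
        rw [hYdef, Finset.mem_image]
        constructor
        · rintro ⟨t, ht, hxt⟩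
          rw [mem_Icc] at ht
          exact ⟨t, ht.1, ht.2, hxt⟩
        · rintro ⟨t, h1, h2, h3⟩
          exact ⟨t, mem_Icc.mpr ⟨h1, h2⟩, h3⟩
      refine le_trans ?_ (Finset.le_sup' _ hYmem)
      apply Finset.le_inf'
      intro i hi
      rw [mem_Icc] at hi
      by_cases hin : i ≤ n
      · rw [hg1 i (mem_Icc.mpr ⟨hi.1, hin⟩) Y]
        have hodd : 2 * i - 1 ∈ Y ↔ a i = true := by
          rw [hmemY]
          constructor
          · rintro ⟨t, h1, h2, h3⟩
            split at h3
            · have : t = i := by omega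
              subst this; assumption
            · omega
          · intro hai
            exact ⟨i, hi.1, hin, by simp [hai]⟩
        have heven : 2 * i ∈ Y ↔ a i = false := by
          rw [hmemY]
          constructor
          · rintro ⟨t, h1, h2, h3⟩
            split at h3
            · omega
            · rename_i hat
              have : t = i := by omega
              subst this
              exact Bool.eq_false_iff.mpr hat
          · intro hai
            exact ⟨i, hi.1, hin, by simp [hai]⟩
        have hcard : ({2 * i - 1, 2 * i} : Finset ℕ) ∩ Y = {if a i then 2 * i - 1 else 2 * i} := by
          ext x
          simp only [Finset.mem_inter, Finset.mem_insert, Finset.mem_singleton]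
          constructor
          · rintro ⟨hx1 | hx1, hx2⟩ <;> subst hx1
            · rw [hodd] at hx2; simp [hx2]
            · rw [heven] at hx2
              simp [hx2]
          · intro hx
            cases hai : a i <;> rw [hai] at hx <;> norm_num at hx <;> subst hx
            · exact ⟨Or.inr rfl, heven.mpr hai⟩
            · exact ⟨Or.inl rfl, hodd.mpr hai⟩
        rw [hcard]
        norm_num
      · have hj : i = n + (i - n) := by omega
        rw [hj, hg2 (i - n) (mem_Icc.mpr ⟨by omega, by omega⟩) Y]
        obtain ⟨t, ht, hct⟩ := ha (i - n) (mem_Icc.mpr ⟨by omega, by omega⟩)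
        rw [mem_Icc] at ht
        have hcond : ∃ x ∈ Y, c (i - n) ((x + 1) / 2) (x % 2 == 1) = true := by
          refine ⟨if a t then 2 * t - 1 else 2 * t, (hmemY _).mpr ⟨t, ht.1, ht.2, rfl⟩, ?_⟩
          cases hat : a t <;> rw [hat] at hct
          · have h1 : (2 * t + 1) / 2 = t := by omega
            have h2 : (2 * t) % 2 = 0 := by omega
            simp only [Bool.false_eq_true, if_false, h1, h2]
            simpa using hct
          · have h1 : (2 * t - 1 + 1) / 2 = t := by omega
            have h2 : (2 * t - 1) % 2 = 1 := by omega
            simp only [if_true, h1, h2]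
            simpa using hct
        rw [if_pos hcond]
  · apply le_antisymm
    · apply Finset.sup'_le
      intro Y hY
      rw [Finset.mem_powerset] at hY
      by_contra hpos
      push_neg at hpos
      have hall : ∀ i ∈ Icc 1 (n + ℓ), 0 < g i Y := fun i hi =>
        lt_of_lt_of_le hpos (Finset.inf'_le _ hi)
      apply hsat
      refine ⟨fun t => decide (2 * t - 1 ∈ Y), ?_⟩
      intro j hj
      rw [mem_Icc] at hj
      have hgj := hall (n + j) (mem_Icc.mpr ⟨by omega, by omega⟩)
      rw [hg2 j (mem_Icc.mpr hj) Y] at hgj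
      by_cases hc : ∃ i ∈ Y, c j ((i + 1) / 2) (i % 2 == 1) = true
      · obtain ⟨x, hxY, hcx⟩ := hc
        have hxr := hY hxY
        rw [mem_Icc] at hxr
        set t := (x + 1) / 2 with htdef
        have ht : 1 ≤ t ∧ t ≤ n := by omega
        refine ⟨t, mem_Icc.mpr ht, ?_⟩
        by_cases hxodd : x % 2 = 1
        · have hx : x = 2 * t - 1 := by omega
          have : (2 * t - 1 ∈ Y) := hx ▸ hxY
          have hat : decide (2 * t - 1 ∈ Y) = true := by simpa using this
          simp only [hat]
          rw [hxodd] at hcx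
          simpa using hcx
        · have hx : x = 2 * t := by omega
          have hx2 : x % 2 = 0 := by omega
          -- show 2*t-1 ∉ Y using g t Y > 0
          have hgt := hall t (mem_Icc.mpr ⟨ht.1, by omega⟩)
          rw [hg1 t (mem_Icc.mpr ht) Y] at hgt
          have hcardodd : (({2 * t - 1, 2 * t} : Finset ℕ) ∩ Y).card % 2 = 1 := by
            by_contra h
            have h0 : (({2 * t - 1, 2 * t} : Finset ℕ) ∩ Y).card % 2 = 0 := by omega
            rw [h0] at hgt
            simp at hgt
          have h2tY : 2 * t ∈ Y := hx ▸ hxY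
          have hnot : 2 * t - 1 ∉ Y := by
            intro hmem
            have hset : ({2 * t - 1, 2 * t} : Finset ℕ) ∩ Y = {2 * t - 1, 2 * t} := by
              rw [Finset.inter_eq_left]
              intro z hz
              simp only [Finset.mem_insert, Finset.mem_singleton] at hz
              rcases hz with hz | hz <;> subst hz <;> assumption
            rw [hset] at hcardodd
            have hne : (2 * t - 1 : ℕ) ≠ 2 * t := by omega
            rw [Finset.card_insert_of_notMem (by simpa using hne), Finset.card_singleton] at hcardodd
            omega
          have hat : decide (2 * t - 1 ∈ Y) = false := by simpa using hnot
          simp only [hat]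
          rw [hx2] at hcx
          simpa using hcx
      · rw [if_neg hc] at hgj
        exact absurd hgj (lt_irrefl 0)
    · refine le_trans ?_ (Finset.le_sup' _ (Finset.empty_mem_powerset _))
      apply Finset.le_inf'
      intro i hi
      exact hgnonneg i hi ∅
end

section
/- Let f : 2^(N1 ⊔ N2) → ℝ≥0 be non-negative and jointly submodular, let F2 ⊆ 2^(N2) with ∅ ∈ F2, and let X* minimize max_{Y ∈ F2} f(X ∪ Y) over X ⊆ N1, with τ = max_{Y ∈ F2} f(X* ∪ Y). Consider the iterative process: X_0 ∈ argmin_{X ⊆ N1} f(X); given X_{i-1}, pick any Y_i ∈ F2 and let X'_i minimize √n1 · f(X ∪ X_{i-1}) + f(X ∪ Y_i) over X ⊆ N1, where n1 = |N1|. Then for every i with f(X* ∪ Y_i) ≤ τ, f(X_{i-1} ∪ X'_i) ≤ f((X* ∩ X'_i) ∪ X_{i-1}) + τ/√n1. -/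
open Finset

/-! Apply submodularity to `X* ∪ Yᵢ` and `X'ᵢ ∪ Yᵢ`, whose meet is `(X* ∩ X'ᵢ) ∪ Yᵢ`; dropping the
non-negative join gives `f((X* ∩ X'ᵢ) ∪ Yᵢ) ≤ τ + f(X'ᵢ ∪ Yᵢ)`. Comparing the objective of `X'ᵢ` with
that of the competitor `X* ∩ X'ᵢ`, the `Yᵢ`-terms then cost at most `τ`, which after dividing by
`√n1` is the claim. -/

theorem Finset.apply_inter_le_add_of_submodular {α : Type*} [DecidableEq α] {U A B : Finset α}
    {f : Finset α → ℝ} (hf_nonneg : ∀ S ⊆ U, 0 ≤ f S)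
    (hf_sub : ∀ A ⊆ U, ∀ B ⊆ U, f (A ∪ B) + f (A ∩ B) ≤ f A + f B) (hA : A ⊆ U) (hB : B ⊆ U) :
    f (A ∩ B) ≤ f A + f B := by
  linarith [hf_sub A hA B hB, hf_nonneg (A ∪ B) (union_subset hA hB)]

theorem le_add_div_of_mul_add_le {a a' b b' τ c : ℝ} (hc : 0 < c)
    (hmin : c * a + b ≤ c * a' + b') (hb' : b' ≤ τ + b) : a ≤ a' + τ / c := by
  rw [add_div' _ _ _ hc.ne', le_div_iff₀ hc]
  linarith

theorem stmt_11_general {α : Type*} [DecidableEq α] (N1 N2 : Finset α)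
    (hN1 : 1 ≤ N1.card)
    (f : Finset α → ℝ)
    (hf_nonneg : ∀ S ⊆ N1 ∪ N2, 0 ≤ f S)
    (hf_sub : ∀ A ⊆ N1 ∪ N2, ∀ B ⊆ N1 ∪ N2, f (A ∪ B) + f (A ∩ B) ≤ f A + f B)
    (F2 : Finset (Finset α)) (hF2sub : ∀ Y ∈ F2, Y ⊆ N2)
    (Xstar : Finset α) (hXstar_sub : Xstar ⊆ N1)
    (τ : ℝ)
    (Xprev : Finset α)
    (Yi : Finset α) (hYi : Yi ∈ F2)
    (X'i : Finset α) (hX'i_sub : X'i ⊆ N1)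
    (hX'i_min : ∀ X ⊆ N1,
      Real.sqrt N1.card * f (X'i ∪ Xprev) + f (X'i ∪ Yi) ≤
        Real.sqrt N1.card * f (X ∪ Xprev) + f (X ∪ Yi))
    (hYτ : f (Xstar ∪ Yi) ≤ τ) :
    f (Xprev ∪ X'i) ≤ f ((Xstar ∩ X'i) ∪ Xprev) + τ / Real.sqrt N1.card := by
  have hsqrt : 0 < Real.sqrt N1.card := Real.sqrt_pos.2 (by exact_mod_cast hN1)
  have hYi_sub : Yi ⊆ N1 ∪ N2 := (hF2sub Yi hYi).trans subset_union_right
  have hmeet : f ((Xstar ∩ X'i) ∪ Yi) ≤ τ + f (X'i ∪ Yi) := by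
    rw [inter_union_distrib_right]
    linarith [apply_inter_le_add_of_submodular hf_nonneg hf_sub
      (union_subset (hXstar_sub.trans subset_union_left) hYi_sub)
      (union_subset (hX'i_sub.trans subset_union_left) hYi_sub)]
  rw [union_comm Xprev X'i]
  exact le_add_div_of_mul_add_le hsqrt
    (hX'i_min (Xstar ∩ X'i) (inter_subset_left.trans hXstar_sub)) hmeet

/-- For `f` non-negative jointly submodular, `∅ ∈ F2`, `X*` a minimizer of
`max_{Y ∈ F2} f(X ∪ Y)` over `X ⊆ N1` with value `τ`, and `X'ᵢ` a minimizer of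
`√n1 · f(X ∪ Xᵢ₋₁) + f(X ∪ Yᵢ)` over `X ⊆ N1` (for some `Yᵢ ∈ F2`): whenever
`f(X* ∪ Yᵢ) ≤ τ`, we have `f(Xᵢ₋₁ ∪ X'ᵢ) ≤ f((X* ∩ X'ᵢ) ∪ Xᵢ₋₁) + τ/√n1`. -/
theorem stmt_11 {α : Type*} [DecidableEq α] (N1 N2 : Finset α) (hdisj : Disjoint N1 N2)
    (hN1 : 1 ≤ N1.card)
    (f : Finset α → ℝ)
    (hf_nonneg : ∀ S ⊆ N1 ∪ N2, 0 ≤ f S)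
    (hf_sub : ∀ A ⊆ N1 ∪ N2, ∀ B ⊆ N1 ∪ N2, f (A ∪ B) + f (A ∩ B) ≤ f A + f B)
    (F2 : Finset (Finset α)) (hF2sub : ∀ Y ∈ F2, Y ⊆ N2) (hF2empty : ∅ ∈ F2)
    (Xstar : Finset α) (hXstar_sub : Xstar ⊆ N1)
    (τ : ℝ) (hτ : τ = F2.sup' ⟨∅, hF2empty⟩ (fun Y => f (Xstar ∪ Y)))
    (hXstar_min : ∀ X ⊆ N1, τ ≤ F2.sup' ⟨∅, hF2empty⟩ (fun Y => f (X ∪ Y)))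
    (Xprev : Finset α) (hXprev : Xprev ⊆ N1)
    (Yi : Finset α) (hYi : Yi ∈ F2)
    (X'i : Finset α) (hX'i_sub : X'i ⊆ N1)
    (hX'i_min : ∀ X ⊆ N1,
      Real.sqrt N1.card * f (X'i ∪ Xprev) + f (X'i ∪ Yi) ≤
        Real.sqrt N1.card * f (X ∪ Xprev) + f (X ∪ Yi))
    (hYτ : f (Xstar ∪ Yi) ≤ τ) :
    f (Xprev ∪ X'i) ≤ f ((Xstar ∩ X'i) ∪ Xprev) + τ / Real.sqrt N1.card :=
  stmt_11_general N1 N2 hN1 f hf_nonneg hf_sub F2 hF2sub Xstar hXstar_sub τ Xprev Yi hYi X'i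
    hX'i_sub hX'i_min hYτ
end

section
/- Let N1, N2 be disjoint finite sets, β ≥ 0, λ ≥ 0, and s_{u,v} ∈ [0,1] for u ∈ N2, v ∈ N1. Then the function f(X ∪ Y) = Σ_{v ∈ N1 \ X} max_{u ∈ Y} s_{u,v} + β · Σ_{u ∈ N1 \ X} Σ_{v ∈ Y} s_{u,v} + λ·|X| (defined for X ⊆ N1 and Y ⊆ N2, with the max over the empty set being 0) is non-negative and jointly submodular on 2^(N1 ∪ N2). -/
open Finset

private noncomputable def mAux {α : Type*} (s : α → α → ℝ) (Y : Finset α) (v : α) : ℝ :=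
  if h : Y.Nonempty then Y.sup' h (fun u => s u v) else 0

private lemma mAux_nonneg {α : Type*} {s : α → α → ℝ} {Y : Finset α} {v : α}
    (h0 : ∀ u ∈ Y, 0 ≤ s u v) : 0 ≤ mAux s Y v := by
  by_cases h : Y.Nonempty
  · obtain ⟨u, hu⟩ := h
    rw [mAux, dif_pos ⟨u, hu⟩]
    exact le_trans (h0 u hu) (le_sup' (fun u => s u v) hu)
  · rw [mAux, dif_neg h]

private lemma mAux_mono {α : Type*} {s : α → α → ℝ} {Y Y' : Finset α} {v : α}
    (hsub : Y ⊆ Y') (h0 : ∀ u ∈ Y', 0 ≤ s u v) : mAux s Y v ≤ mAux s Y' v := by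
  by_cases h : Y.Nonempty
  · rw [mAux, dif_pos h, mAux, dif_pos (h.mono hsub)]
    exact sup'_mono _ hsub h
  · rw [mAux, dif_neg h]
    exact mAux_nonneg h0

private lemma mAux_submod {α : Type*} [DecidableEq α] {s : α → α → ℝ} {YA YB : Finset α} {v : α}
    (h0 : ∀ u ∈ YA ∪ YB, 0 ≤ s u v) :
    mAux s (YA ∪ YB) v + mAux s (YA ∩ YB) v ≤ mAux s YA v + mAux s YB v := by
  have h0A : ∀ u ∈ YA, 0 ≤ s u v := fun u hu => h0 u (mem_union_left _ hu)
  have h0B : ∀ u ∈ YB, 0 ≤ s u v := fun u hu => h0 u (mem_union_right _ hu)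
  by_cases hA : YA.Nonempty
  · by_cases hB : YB.Nonempty
    · have hU : mAux s (YA ∪ YB) v = max (mAux s YA v) (mAux s YB v) := by
        rw [mAux, dif_pos (hA.mono subset_union_left), mAux, dif_pos hA, mAux, dif_pos hB]
        rw [sup'_union hA hB]
      have hIA : mAux s (YA ∩ YB) v ≤ mAux s YA v := mAux_mono inter_subset_left h0A
      have hIB : mAux s (YA ∩ YB) v ≤ mAux s YB v := mAux_mono inter_subset_right h0B
      have := max_add_min (mAux s YA v) (mAux s YB v)
      have hmin : mAux s (YA ∩ YB) v ≤ min (mAux s YA v) (mAux s YB v) := le_min hIA hIB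
      linarith
    · rw [not_nonempty_iff_eq_empty] at hB
      simp only [hB, union_empty, inter_empty]
      linarith
  · rw [not_nonempty_iff_eq_empty] at hA
    simp only [hA, empty_union, empty_inter]
    linarith

private lemma key_sum {α : Type*} [DecidableEq α] (C D : Finset α) (a b c d : α → ℝ)
    (h1 : ∀ v ∈ C ∩ D, b v + a v ≤ c v + d v)
    (h2 : ∀ v ∈ C \ D, a v ≤ c v)
    (h3 : ∀ v ∈ D \ C, a v ≤ d v) :
    (∑ v ∈ C ∩ D, b v) + (∑ v ∈ C ∪ D, a v) ≤ (∑ v ∈ C, c v) + (∑ v ∈ D, d v) := by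
  have eU : ∑ v ∈ C ∪ D, a v = ∑ v ∈ C, a v + ∑ v ∈ D \ C, a v := by
    rw [← sum_union (disjoint_sdiff)]
    congr 1
    rw [union_sdiff_self_eq_union]
  have eC : ∀ g : α → ℝ, ∑ v ∈ C, g v = ∑ v ∈ C ∩ D, g v + ∑ v ∈ C \ D, g v :=
    fun g => (sum_inter_add_sum_sdiff C D g).symm
  have eD : ∑ v ∈ D, d v = ∑ v ∈ C ∩ D, d v + ∑ v ∈ D \ C, d v := by
    rw [inter_comm]
    exact (sum_inter_add_sum_sdiff D C d).symm
  have s1 : ∑ v ∈ C ∩ D, (b v + a v) ≤ ∑ v ∈ C ∩ D, (c v + d v) := sum_le_sum h1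
  have s2 : ∑ v ∈ C \ D, a v ≤ ∑ v ∈ C \ D, c v := sum_le_sum h2
  have s3 : ∑ v ∈ D \ C, a v ≤ ∑ v ∈ D \ C, d v := sum_le_sum h3
  rw [sum_add_distrib, sum_add_distrib] at s1
  rw [eU, eC a, eC c, eD]
  linarith

/-- The prompt-engineering objective
`f(X ∪ Y) = ∑_{v ∈ N1 \ X} max_{u ∈ Y} s(u,v) + β·∑_{u ∈ N1 \ X} ∑_{v ∈ Y} s(v,u) + λ·|X|`
(with the max over the empty set equal to `0`) is non-negative and jointly submodular on
`2^(N1 ∪ N2)`. -/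
theorem stmt_12 {α : Type*} [DecidableEq α] (N1 N2 : Finset α) (hdisj : Disjoint N1 N2)
    (β lam : ℝ) (hβ : 0 ≤ β) (hlam : 0 ≤ lam)
    (s : α → α → ℝ) (hs : ∀ u ∈ N2, ∀ v ∈ N1, s u v ∈ Set.Icc (0 : ℝ) 1)
    (f : Finset α → ℝ)
    (hf : ∀ X ⊆ N1, ∀ Y ⊆ N2,
      f (X ∪ Y) =
        (∑ v ∈ N1 \ X, if h : Y.Nonempty then Y.sup' h (fun u => s u v) else 0)
          + β * (∑ u ∈ N1 \ X, ∑ v ∈ Y, s v u)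
          + lam * X.card) :
    (∀ S ⊆ N1 ∪ N2, 0 ≤ f S) ∧
      (∀ A ⊆ N1 ∪ N2, ∀ B ⊆ N1 ∪ N2, f (A ∪ B) + f (A ∩ B) ≤ f A + f B) := by
  classical
  -- w combines both pointwise terms
  set w : Finset α → α → ℝ := fun Y v => mAux s Y v + β * ∑ x ∈ Y, s x v with hw
  have hfw : ∀ X ⊆ N1, ∀ Y ⊆ N2,
      f (X ∪ Y) = (∑ v ∈ N1 \ X, w Y v) + lam * X.card := by
    intro X hX Y hY
    rw [hf X hX Y hY]
    simp only [hw, sum_add_distrib, mul_sum, mAux]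
  have hs0 : ∀ v ∈ N1, ∀ u ∈ N2, 0 ≤ s u v := fun v hv u hu => (hs u hu v hv).1
  have hw_nonneg : ∀ Y ⊆ N2, ∀ v ∈ N1, 0 ≤ w Y v := by
    intro Y hY v hv
    have h1 : 0 ≤ mAux s Y v := mAux_nonneg (fun u hu => hs0 v hv u (hY hu))
    have h2 : 0 ≤ ∑ x ∈ Y, s x v := sum_nonneg (fun u hu => hs0 v hv u (hY hu))
    simp only [hw]
    positivity
  have hw_mono : ∀ Y Y', Y ⊆ Y' → Y' ⊆ N2 → ∀ v ∈ N1, w Y v ≤ w Y' v := by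
    intro Y Y' hYY' hY' v hv
    have h1 : mAux s Y v ≤ mAux s Y' v := mAux_mono hYY' (fun u hu => hs0 v hv u (hY' hu))
    have h2 : ∑ x ∈ Y, s x v ≤ ∑ x ∈ Y', s x v :=
      sum_le_sum_of_subset_of_nonneg hYY' (fun u hu _ => hs0 v hv u (hY' hu))
    simp only [hw]
    nlinarith
  have hw_submod : ∀ YA YB, YA ⊆ N2 → YB ⊆ N2 → ∀ v ∈ N1,
      w (YA ∪ YB) v + w (YA ∩ YB) v ≤ w YA v + w YB v := by
    intro YA YB hYA hYB v hv
    have h1 : mAux s (YA ∪ YB) v + mAux s (YA ∩ YB) v ≤ mAux s YA v + mAux s YB v :=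
      mAux_submod (fun u hu => hs0 v hv u (union_subset hYA hYB hu))
    have h2 : (∑ x ∈ YA ∪ YB, s x v) + ∑ x ∈ YA ∩ YB, s x v
        = (∑ x ∈ YA, s x v) + ∑ x ∈ YB, s x v := sum_union_inter
    simp only [hw]
    nlinarith
  -- decomposition of subsets of N1 ∪ N2
  have hdec : ∀ S ⊆ N1 ∪ N2, S = (S ∩ N1) ∪ (S ∩ N2) := by
    intro S hS
    ext x
    simp only [mem_union, mem_inter]
    constructor
    · intro hx
      rcases mem_union.mp (hS hx) with h | h
      · exact Or.inl ⟨hx, h⟩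
      · exact Or.inr ⟨hx, h⟩
    · rintro (⟨h, _⟩ | ⟨h, _⟩) <;> exact h
  constructor
  · intro S hS
    rw [hdec S hS, hfw _ inter_subset_right _ inter_subset_right]
    have h1 : 0 ≤ ∑ v ∈ N1 \ (S ∩ N1), w (S ∩ N2) v :=
      sum_nonneg (fun v hv => hw_nonneg _ inter_subset_right v (mem_sdiff.mp hv).1)
    exact add_nonneg h1 (mul_nonneg hlam (Nat.cast_nonneg _))
  · intro A hA B hB
    have hXAs : A ∩ N1 ⊆ N1 := inter_subset_right
    have hXBs : B ∩ N1 ⊆ N1 := inter_subset_right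
    have hYAs : A ∩ N2 ⊆ N2 := inter_subset_right
    have hYBs : B ∩ N2 ⊆ N2 := inter_subset_right
    have hU : A ∪ B = ((A ∩ N1) ∪ (B ∩ N1)) ∪ ((A ∩ N2) ∪ (B ∩ N2)) := by
      rw [hdec (A ∪ B) (union_subset hA hB)]
      congr 1 <;> (ext x; simp only [mem_union, mem_inter]) <;> tauto
    have hI : A ∩ B = ((A ∩ N1) ∩ (B ∩ N1)) ∪ ((A ∩ N2) ∩ (B ∩ N2)) := by
      rw [hdec (A ∩ B) ((inter_subset_left).trans hA)]
      congr 1 <;> (ext x; simp only [mem_union, mem_inter]) <;> tauto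
    have eA : f A = (∑ v ∈ N1 \ (A ∩ N1), w (A ∩ N2) v) + lam * (A ∩ N1).card := by
      conv_lhs => rw [hdec A hA]
      exact hfw _ hXAs _ hYAs
    have eB : f B = (∑ v ∈ N1 \ (B ∩ N1), w (B ∩ N2) v) + lam * (B ∩ N1).card := by
      conv_lhs => rw [hdec B hB]
      exact hfw _ hXBs _ hYBs
    have eU : f (A ∪ B) = (∑ v ∈ N1 \ ((A ∩ N1) ∪ (B ∩ N1)), w ((A ∩ N2) ∪ (B ∩ N2)) v)
        + lam * ((A ∩ N1) ∪ (B ∩ N1)).card := by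
      conv_lhs => rw [hU]
      exact hfw _ (union_subset hXAs hXBs) _ (union_subset hYAs hYBs)
    have eI : f (A ∩ B) = (∑ v ∈ N1 \ ((A ∩ N1) ∩ (B ∩ N1)), w ((A ∩ N2) ∩ (B ∩ N2)) v)
        + lam * ((A ∩ N1) ∩ (B ∩ N1)).card := by
      conv_lhs => rw [hI]
      exact hfw _ (inter_subset_left.trans hXAs) _ (inter_subset_left.trans hYAs)
    rw [eA, eB, eU, eI]
    have hcard : lam * (((A ∩ N1) ∪ (B ∩ N1)).card : ℝ)
        + lam * (((A ∩ N1) ∩ (B ∩ N1)).card : ℝ)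
        = lam * (A ∩ N1).card + lam * (B ∩ N1).card := by
      have h := card_union_add_card_inter (A ∩ N1) (B ∩ N1)
      have h' : (((A ∩ N1) ∪ (B ∩ N1)).card : ℝ) + (((A ∩ N1) ∩ (B ∩ N1)).card : ℝ)
          = ((A ∩ N1).card : ℝ) + ((B ∩ N1).card : ℝ) := by exact_mod_cast h
      rw [← mul_add, ← mul_add, h']
    have hCint : N1 \ ((A ∩ N1) ∪ (B ∩ N1)) = (N1 \ (A ∩ N1)) ∩ (N1 \ (B ∩ N1)) := by
      ext x; simp only [mem_sdiff, mem_inter, mem_union]; tauto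
    have hCun : N1 \ ((A ∩ N1) ∩ (B ∩ N1)) = (N1 \ (A ∩ N1)) ∪ (N1 \ (B ∩ N1)) := by
      ext x; simp only [mem_sdiff, mem_inter, mem_union]; tauto
    have hmain : (∑ v ∈ N1 \ ((A ∩ N1) ∪ (B ∩ N1)), w ((A ∩ N2) ∪ (B ∩ N2)) v)
        + (∑ v ∈ N1 \ ((A ∩ N1) ∩ (B ∩ N1)), w ((A ∩ N2) ∩ (B ∩ N2)) v)
        ≤ (∑ v ∈ N1 \ (A ∩ N1), w (A ∩ N2) v) + (∑ v ∈ N1 \ (B ∩ N1), w (B ∩ N2) v) := by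
      rw [hCint, hCun]
      apply key_sum
      · intro v hv
        have hv1 : v ∈ N1 := (mem_sdiff.mp (mem_inter.mp hv).1).1
        exact hw_submod _ _ hYAs hYBs v hv1
      · intro v hv
        have hv1 : v ∈ N1 := (mem_sdiff.mp (mem_sdiff.mp hv).1).1
        exact hw_mono _ _ inter_subset_left hYAs v hv1
      · intro v hv
        have hv1 : v ∈ N1 := (mem_sdiff.mp (mem_sdiff.mp hv).1).1
        exact hw_mono _ _ inter_subset_right hYBs v hv1
    linarith
end

section
/- Let N ⊇ N2 be finite sets with N1 = N \ N2, let s_{u,v} ≥ 0 be symmetric scores for u, v ∈ N, and λ ≥ 0. Then the function f(X ∪ Y) = Σ_{v ∈ N \ X} max_{u ∈ Y} s_{u,v} − (1/|N2|)·Σ_{u ∈ Y} Σ_{v ∈ Y} s_{u,v} + λ·|X|, defined for X ⊆ N1 and Y ⊆ N2 (with max over the empty set equal to 0), is non-negative. -/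
open Finset

/-- The ride-share objective
`f(X ∪ Y) = ∑_{v ∈ N \ X} max_{u ∈ Y} s(u,v) − (1/|N2|)·∑_{u ∈ Y} ∑_{v ∈ Y} s(u,v) + λ·|X|`
(with the max over the empty set equal to `0`) is non-negative, where `X ⊆ N1 = N \ N2` and
`Y ⊆ N2`, for symmetric non-negative scores `s` and `λ ≥ 0`. -/
theorem stmt_13 {α : Type*} [DecidableEq α] (N N2 : Finset α) (hN2 : N2 ⊆ N)
    (hN2ne : N2.Nonempty)
    (s : α → α → ℝ) (hs_nonneg : ∀ u v, 0 ≤ s u v) (hs_symm : ∀ u v, s u v = s v u)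
    (lam : ℝ) (hlam : 0 ≤ lam) :
    ∀ X ⊆ N \ N2, ∀ Y ⊆ N2,
      0 ≤ (∑ v ∈ N \ X, if h : Y.Nonempty then Y.sup' h (fun u => s u v) else 0)
            - (1 / (N2.card : ℝ)) * (∑ u ∈ Y, ∑ v ∈ Y, s u v)
            + lam * X.card := by
  intro X hX Y hY
  have hlamX : (0:ℝ) ≤ lam * X.card := mul_nonneg hlam (by positivity)
  by_cases hYne : Y.Nonempty
  · simp only [dif_pos hYne]
    have hcardpos : (0:ℝ) < N2.card := by
      exact_mod_cast Finset.card_pos.mpr hN2ne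
    have hsupnn : ∀ v, 0 ≤ Y.sup' hYne (fun u => s u v) := fun v =>
      le_trans (hs_nonneg hYne.choose v) (Finset.le_sup' (fun u => s u v) hYne.choose_spec)
    have hYN : Y ⊆ N \ X := by
      intro y hy
      rw [mem_sdiff]
      exact ⟨hN2 (hY hy), fun hx => (mem_sdiff.mp (hX hx)).2 (hY hy)⟩
    have h1 : ∑ v ∈ Y, Y.sup' hYne (fun u => s u v)
        ≤ ∑ v ∈ N \ X, Y.sup' hYne (fun u => s u v) :=
      Finset.sum_le_sum_of_subset_of_nonneg hYN (fun i _ _ => hsupnn i)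
    have h2 : (1 / (N2.card : ℝ)) * (∑ u ∈ Y, ∑ v ∈ Y, s u v)
        ≤ ∑ v ∈ Y, Y.sup' hYne (fun u => s u v) := by
      rw [Finset.sum_comm, div_mul_eq_mul_div, div_le_iff₀ hcardpos, one_mul,
        Finset.sum_mul]
      apply Finset.sum_le_sum
      intro v _
      have hstep : ∑ u ∈ Y, s u v ≤ (Y.card : ℝ) * Y.sup' hYne (fun u => s u v) := by
        calc ∑ u ∈ Y, s u v ≤ ∑ u ∈ Y, Y.sup' hYne (fun u => s u v) :=
              Finset.sum_le_sum (fun u hu => Finset.le_sup' (fun u => s u v) hu)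
          _ = (Y.card : ℝ) * Y.sup' hYne (fun u => s u v) := by
              rw [Finset.sum_const, nsmul_eq_mul]
      have hcard : (Y.card : ℝ) ≤ N2.card := by
        exact_mod_cast Finset.card_le_card hY
      calc ∑ u ∈ Y, s u v ≤ (Y.card : ℝ) * Y.sup' hYne (fun u => s u v) := hstep
        _ ≤ (N2.card : ℝ) * Y.sup' hYne (fun u => s u v) :=
            mul_le_mul_of_nonneg_right hcard (hsupnn v)
        _ = Y.sup' hYne (fun u => s u v) * N2.card := mul_comm _ _
    linarith
  · obtain rfl := Finset.not_nonempty_iff_eq_empty.mp hYne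
    simp only [Finset.not_nonempty_empty, dif_neg, dite_false, Finset.sum_empty,
      Finset.sum_const_zero, mul_zero, sub_zero]
    linarith
end

section
/- Let N1, N2 be disjoint finite sets, s_{u,v} ≥ 0 scores for pairs from N = N1 ∪ N2, and λ ≥ 0. Then f(X ∪ Y) = Σ_{v ∈ N \ X} max_{u ∈ Y} s_{u,v} − (1/|N2|)·Σ_{u ∈ Y} Σ_{v ∈ Y} s_{u,v} + λ·|X| (for X ⊆ N1, Y ⊆ N2, with max over ∅ equal to 0) is jointly submodular: for all X' ⊆ X ⊆ N1, Y' ⊆ Y ⊆ N2, and u ∈ (N1 ∪ N2) \ (X ∪ Y), the marginal f(u | X' ∪ Y') ≥ f(u | X ∪ Y). -/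
open Finset

section aux
variable {α : Type*} [DecidableEq α]

noncomputable def gmax (s : α → α → ℝ) (Y : Finset α) (v : α) : ℝ :=
  if h : Y.Nonempty then Y.sup' h (fun u => s u v) else 0

lemma gmax_nonneg (s : α → α → ℝ) (hs : ∀ u v, 0 ≤ s u v) (Y : Finset α) (v : α) :
    0 ≤ gmax s Y v := by
  unfold gmax
  split
  · next h => obtain ⟨a, ha⟩ := h; exact le_trans (hs a v) (le_sup' (fun u => s u v) ha)
  · exact le_refl 0

lemma gmax_mono (s : α → α → ℝ) (hs : ∀ u v, 0 ≤ s u v) {Y' Y : Finset α} (hYY : Y' ⊆ Y)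
    (v : α) : gmax s Y' v ≤ gmax s Y v := by
  unfold gmax
  split
  · next h' =>
    have h : Y.Nonempty := h'.mono hYY
    rw [dif_pos h]
    exact sup'_le h' _ (fun b hb => le_sup' (fun u => s u v) (hYY hb))
  · exact gmax_nonneg s hs Y v

lemma gmax_insert (s : α → α → ℝ) (hs : ∀ u v, 0 ≤ s u v) (Y : Finset α) (u v : α) :
    gmax s (insert u Y) v = max (s u v) (gmax s Y v) := by
  unfold gmax
  rcases Y.eq_empty_or_nonempty with rfl | h
  · simp [max_eq_left (hs u v)]
  · rw [dif_pos h, dif_pos (insert_nonempty u Y), sup'_insert]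

lemma gmax_diff_le (s : α → α → ℝ) (hs : ∀ u v, 0 ≤ s u v) {Y' Y : Finset α} (hYY : Y' ⊆ Y)
    (u v : α) :
    gmax s (insert u Y) v - gmax s Y v ≤ gmax s (insert u Y') v - gmax s Y' v := by
  rw [gmax_insert s hs, gmax_insert s hs]
  have key : ∀ a b b' : ℝ, b' ≤ b → max a b - b ≤ max a b' - b' := by
    intro a b b' hb
    rcases le_total a b' with h | h
    · rw [max_eq_right h, max_eq_right (h.trans hb)]; linarith
    · rw [max_eq_left h]
      rcases le_total a b with h2 | h2
      · rw [max_eq_right h2]; linarith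
      · rw [max_eq_left h2]; linarith
  exact key _ _ _ (gmax_mono s hs hYY v)

end aux

/-- The ride-share objective
`f(X ∪ Y) = ∑_{v ∈ N \ X} max_{u ∈ Y} s(u,v) − (1/|N2|)·∑_{u ∈ Y} ∑_{v ∈ Y} s(u,v) + λ·|X|`
(`N = N1 ∪ N2`, max over `∅` equal to `0`) is jointly submodular: for all `X' ⊆ X ⊆ N1`,
`Y' ⊆ Y ⊆ N2` and `u ∈ (N1 ∪ N2) \ (X ∪ Y)`, `f(u | X' ∪ Y') ≥ f(u | X ∪ Y)`. -/
theorem stmt_14 {α : Type*} [DecidableEq α] (N1 N2 : Finset α) (hdisj : Disjoint N1 N2)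
    (hN2ne : N2.Nonempty)
    (s : α → α → ℝ) (hs_nonneg : ∀ u v, 0 ≤ s u v) (hs_symm : ∀ u v, s u v = s v u)
    (lam : ℝ) (hlam : 0 ≤ lam)
    (f : Finset α → ℝ)
    (hf : ∀ X ⊆ N1, ∀ Y ⊆ N2,
      f (X ∪ Y) =
        (∑ v ∈ (N1 ∪ N2) \ X, if h : Y.Nonempty then Y.sup' h (fun u => s u v) else 0)
          - (1 / (N2.card : ℝ)) * (∑ u ∈ Y, ∑ v ∈ Y, s u v)
          + lam * X.card) :
    ∀ X' X Y' Y : Finset α, X' ⊆ X → X ⊆ N1 → Y' ⊆ Y → Y ⊆ N2 →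
      ∀ u ∈ (N1 ∪ N2) \ (X ∪ Y),
        f (insert u (X ∪ Y)) - f (X ∪ Y) ≤ f (insert u (X' ∪ Y')) - f (X' ∪ Y') := by
  intro X' X Y' Y hXX' hXN hYY' hYN u hu
  have hgm : ∀ (Z : Finset α) (v : α),
      (if h : Z.Nonempty then Z.sup' h (fun u => s u v) else 0) = gmax s Z v := fun _ _ => rfl
  simp only [mem_sdiff, mem_union, not_or] at hu
  obtain ⟨huN, huX, huY⟩ := hu
  have hX'N : X' ⊆ N1 := hXX'.trans hXN
  have hY'N : Y' ⊆ N2 := hYY'.trans hYN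
  have huX' : u ∉ X' := fun h => huX (hXX' h)
  have huY' : u ∉ Y' := fun h => huY (hYY' h)
  have hc : (0:ℝ) ≤ 1 / (N2.card : ℝ) := by positivity
  rcases huN with hu1 | hu2
  · -- u ∈ N1
    have h1 := hf (insert u X) (insert_subset hu1 hXN) Y hYN
    have h2 := hf X hXN Y hYN
    have h3 := hf (insert u X') (insert_subset hu1 hX'N) Y' hY'N
    have h4 := hf X' hX'N Y' hY'N
    rw [insert_union] at h1 h3
    simp only [hgm] at h1 h2 h3 h4
    have huNX : u ∈ (N1 ∪ N2) \ X := by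
      simp [mem_sdiff, mem_union, hu1, huX]
    have huNX' : u ∈ (N1 ∪ N2) \ X' := by
      simp [mem_sdiff, mem_union, hu1, huX']
    have e1 : ∑ v ∈ (N1 ∪ N2) \ insert u X, gmax s Y v
        = (∑ v ∈ (N1 ∪ N2) \ X, gmax s Y v) - gmax s Y u := by
      rw [sdiff_insert, ← Finset.add_sum_erase _ _ huNX]; ring
    have e2 : ∑ v ∈ (N1 ∪ N2) \ insert u X', gmax s Y' v
        = (∑ v ∈ (N1 ∪ N2) \ X', gmax s Y' v) - gmax s Y' u := by
      rw [sdiff_insert, ← Finset.add_sum_erase _ _ huNX']; ring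
    have ec1 : ((insert u X).card : ℝ) = (X.card : ℝ) + 1 := by
      rw [card_insert_of_notMem huX]; push_cast; ring
    have ec2 : ((insert u X').card : ℝ) = (X'.card : ℝ) + 1 := by
      rw [card_insert_of_notMem huX']; push_cast; ring
    have hmono := gmax_mono s hs_nonneg hYY' u
    rw [h1, h2, h3, h4, e1, e2, ec1, ec2]
    linarith
  · -- u ∈ N2
    have h1 := hf X hXN (insert u Y) (insert_subset hu2 hYN)
    have h2 := hf X hXN Y hYN
    have h3 := hf X' hX'N (insert u Y') (insert_subset hu2 hY'N)
    have h4 := hf X' hX'N Y' hY'N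
    rw [union_insert] at h1 h3
    simp only [hgm] at h1 h2 h3 h4
    -- quadratic expansion
    have quad : ∀ (Z : Finset α), u ∉ Z →
        ∑ a ∈ insert u Z, ∑ b ∈ insert u Z, s a b
          = (∑ a ∈ Z, ∑ b ∈ Z, s a b) + (s u u + 2 * ∑ v ∈ Z, s u v) := by
      intro Z huZ
      rw [sum_insert huZ]
      simp only [sum_insert huZ]
      rw [Finset.sum_add_distrib]
      have : ∑ a ∈ Z, s a u = ∑ a ∈ Z, s u a := sum_congr rfl fun a _ => hs_symm a u
      rw [this]; ring
    rw [quad Y huY] at h1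
    rw [quad Y' huY'] at h3
    -- sum of marginal gains inequality
    have e1 : ∑ v ∈ (N1 ∪ N2) \ X, (gmax s (insert u Y) v - gmax s Y v)
        = (∑ v ∈ (N1 ∪ N2) \ X, gmax s (insert u Y) v)
          - ∑ v ∈ (N1 ∪ N2) \ X, gmax s Y v := sum_sub_distrib _ _
    have e2 : ∑ v ∈ (N1 ∪ N2) \ X', (gmax s (insert u Y') v - gmax s Y' v)
        = (∑ v ∈ (N1 ∪ N2) \ X', gmax s (insert u Y') v)
          - ∑ v ∈ (N1 ∪ N2) \ X', gmax s Y' v := sum_sub_distrib _ _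
    have hsum : ∑ v ∈ (N1 ∪ N2) \ X, (gmax s (insert u Y) v - gmax s Y v)
        ≤ ∑ v ∈ (N1 ∪ N2) \ X', (gmax s (insert u Y') v - gmax s Y' v) := by
      calc ∑ v ∈ (N1 ∪ N2) \ X, (gmax s (insert u Y) v - gmax s Y v)
          ≤ ∑ v ∈ (N1 ∪ N2) \ X, (gmax s (insert u Y') v - gmax s Y' v) :=
            sum_le_sum (fun v _ => gmax_diff_le s hs_nonneg hYY' u v)
        _ ≤ ∑ v ∈ (N1 ∪ N2) \ X', (gmax s (insert u Y') v - gmax s Y' v) := by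
            apply sum_le_sum_of_subset_of_nonneg (sdiff_subset_sdiff Subset.rfl hXX')
            intro v _ _
            have := gmax_mono s hs_nonneg (subset_insert u Y') v
            linarith
    have hquad : ∑ v ∈ Y', s u v ≤ ∑ v ∈ Y, s u v :=
      sum_le_sum_of_subset_of_nonneg hYY' (fun v _ _ => hs_nonneg u v)
    have hq : (1 / (N2.card : ℝ)) * (s u u + 2 * ∑ v ∈ Y', s u v)
        ≤ (1 / (N2.card : ℝ)) * (s u u + 2 * ∑ v ∈ Y, s u v) := by
      apply mul_le_mul_of_nonneg_left _ hc
      linarith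
    rw [h1, h2, h3, h4]
    rw [e1, e2] at hsum
    linarith
end
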